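/- arXiv:1201.2308 — 3 statements merged into one kernel-verified Lean document; each statement's English description precedes it below -/
import Mathlib

section
/- Let H be a real inner product space, a : H × H → ℝ a symmetric bilinear form with a(v,v) ≥ 0 for all v ∈ H, and let (λ,u) be an eigenpair (⟨u,u⟩ = 1, a(u,v) = λ⟨u,v⟩ for all v) such that λ ≤ a(w,w) for every w ∈ H with ⟨w,w⟩ = 1 (λ is the minimum of the Rayleigh quotient). Let V ⊆ H be a subspace. Then λ ≤ a(w,w) for every w ∈ V with ⟨w,w⟩ = 1, and for every v ∈ V with ⟨v,v⟩ = 1 one has a(v,v) ≤ λ + a(u−v, u−v). In particular the discrete first eigenvalue λ_V := inf{a(w,w) : w ∈ V, ⟨w,w⟩ = 1} satisfies λ ≤ λ_V ≤ λ + a(u−v, u−v) for every unit vector v ∈ V. -/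
/-!
Expanding `a (u - v) (u - v)` with the eigenvalue equation gives the identity
`a (v, v) - λ ⟪v, v⟫ = a (u - v, u - v) - λ ⟪u - v, u - v⟫`; since `λ = a (u, u) ≥ 0`, the last
term is nonpositive, which yields the upper bound.
-/

open scoped InnerProductSpace

section EigenpairOfBilinearForm

variable {H : Type*} [NormedAddCommGroup H] [InnerProductSpace ℝ H]
  {a : H →ₗ[ℝ] H →ₗ[ℝ] ℝ} {lam : ℝ} {u : H}

theorem eigenvalue_eq_apply_self (hu : ⟪u, u⟫_ℝ = 1) (heig : ∀ v, a u v = lam * ⟪u, v⟫_ℝ) :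
    lam = a u u := by
  rw [heig u, hu, mul_one]

theorem apply_sub_sub_eigenvector (hsymm : ∀ v w, a v w = a w v) (hu : ⟪u, u⟫_ℝ = 1)
    (heig : ∀ v, a u v = lam * ⟪u, v⟫_ℝ) (v : H) :
    a (u - v) (u - v) - lam * ⟪u - v, u - v⟫_ℝ = a v v - lam * ⟪v, v⟫_ℝ := by
  simp only [map_sub, LinearMap.sub_apply, inner_sub_left, inner_sub_right]
  rw [hsymm v u, heig, heig, real_inner_comm v u, hu]
  ring

theorem apply_self_le_eigenvalue_add (hsymm : ∀ v w, a v w = a w v) (hpos : ∀ v, 0 ≤ a v v)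
    (hu : ⟪u, u⟫_ℝ = 1) (heig : ∀ v, a u v = lam * ⟪u, v⟫_ℝ) {v : H} (hv : ⟪v, v⟫_ℝ = 1) :
    a v v ≤ lam + a (u - v) (u - v) := by
  have hid := apply_sub_sub_eigenvector hsymm hu heig v
  have hlam : 0 ≤ lam := eigenvalue_eq_apply_self hu heig ▸ hpos u
  have hdist : 0 ≤ lam * ⟪u - v, u - v⟫_ℝ := mul_nonneg hlam real_inner_self_nonneg
  rw [hv, mul_one] at hid
  linarith

end EigenpairOfBilinearForm

/-- Minimum-maximum principle for the first eigenvalue: if `lam` is the minimum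
of the Rayleigh quotient of a positive semidefinite symmetric bilinear form `a`
with eigenvector `u`, then on any subspace `V` the Rayleigh quotient is `≥ lam`,
every unit `v ∈ V` satisfies `a(v,v) ≤ lam + a(u−v,u−v)`, and the discrete first
eigenvalue `λ_V = inf {a(w,w) : w ∈ V, ⟪w,w⟫ = 1}` satisfies
`lam ≤ λ_V ≤ lam + a(u−v,u−v)` for every unit `v ∈ V`. -/
theorem discrete_first_eigenvalue_bounds
    {H : Type*} [NormedAddCommGroup H] [InnerProductSpace ℝ H]
    (a : H →ₗ[ℝ] H →ₗ[ℝ] ℝ) (hsymm : ∀ v w : H, a v w = a w v)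
    (hpos : ∀ v : H, 0 ≤ a v v)
    (lam : ℝ) (u : H) (hu : (inner ℝ u u : ℝ) = 1)
    (heig : ∀ v : H, a u v = lam * (inner ℝ u v : ℝ))
    (hmin : ∀ w : H, (inner ℝ w w : ℝ) = 1 → lam ≤ a w w)
    (V : Submodule ℝ H) :
    (∀ w ∈ V, (inner ℝ w w : ℝ) = 1 → lam ≤ a w w) ∧
    (∀ v ∈ V, (inner ℝ v v : ℝ) = 1 → a v v ≤ lam + a (u - v) (u - v)) ∧
    (∀ v ∈ V, (inner ℝ v v : ℝ) = 1 →
      lam ≤ sInf {x : ℝ | ∃ w ∈ V, (inner ℝ w w : ℝ) = 1 ∧ a w w = x} ∧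
      sInf {x : ℝ | ∃ w ∈ V, (inner ℝ w w : ℝ) = 1 ∧ a w w = x}
        ≤ lam + a (u - v) (u - v)) := by
  have hupper {v : H} (hv : ⟪v, v⟫_ℝ = 1) : a v v ≤ lam + a (u - v) (u - v) :=
    apply_self_le_eigenvalue_add hsymm hpos hu heig hv
  refine ⟨fun w _ hw => hmin w hw, fun v _ hv => hupper hv, fun v hvV hv => ?_⟩
  have hmem : a v v ∈ {x : ℝ | ∃ w ∈ V, ⟪w, w⟫_ℝ = 1 ∧ a w w = x} := ⟨v, hvV, hv, rfl⟩
  have hlower : ∀ x ∈ {x : ℝ | ∃ w ∈ V, ⟪w, w⟫_ℝ = 1 ∧ a w w = x}, lam ≤ x := by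
    rintro x ⟨w, -, hw, rfl⟩
    exact hmin w hw
  exact ⟨le_csInf ⟨_, hmem⟩ hlower, (csInf_le ⟨lam, hlower⟩ hmem).trans (hupper hv)⟩
end

section
/- (Aubin–Nitsche duality estimate.) Let H be a real inner product space, a : H × H → ℝ a symmetric bilinear form with a(v,v) ≥ 0 for all v ∈ H, and K : H → H a linear map satisfying a(Kf, v) = ⟨f, v⟩ for all f, v ∈ H. Let V ⊆ H be a subspace and η ≥ 0 be such that for every g ∈ H there exists v ∈ V with √(a(Kg − v, Kg − v)) ≤ η‖g‖. Then for every u ∈ H and every Galerkin projection w ∈ V of u onto V (a(u − w, v) = 0 for all v ∈ V) one has ‖u − w‖ ≤ η √(a(u − w, u − w)). -/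
/-!
Duality: testing the error `e = u - w` against itself through `K` gives
`‖e‖² = ⟪e, e⟫ = a(e, K e) = a(e, K e - v)` for every `v ∈ V`, by Galerkin orthogonality.
Cauchy–Schwarz for the semidefinite form `a` and the approximation property for `g = e`
bound this by `‖e‖_a · η ‖e‖`; dividing by `‖e‖` gives the estimate.
-/

namespace LinearMap.BilinForm

lemma apply_le_sqrt_mul_sqrt {M : Type*} [AddCommGroup M] [Module ℝ M]
    (B : LinearMap.BilinForm ℝ M) (hs : ∀ x, 0 ≤ B x x) (hB : LinearMap.IsSymm B) (x y : M) :
    B x y ≤ √(B x x) * √(B y y) := by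
  rw [← Real.sqrt_mul (hs x)]
  exact (le_abs_self _).trans (Real.abs_le_sqrt (B.apply_sq_le_of_symm hs hB x y))

end LinearMap.BilinForm

lemma norm_mul_self_eq_apply_sub_of_apply_eq_zero
    {H : Type*} [NormedAddCommGroup H] [InnerProductSpace ℝ H]
    (a : H →ₗ[ℝ] H →ₗ[ℝ] ℝ) (hsymm : ∀ v w : H, a v w = a w v)
    (K : H →ₗ[ℝ] H) (hK : ∀ f v : H, a (K f) v = (inner ℝ f v : ℝ))
    {e v : H} (hv : a e v = 0) :
    ‖e‖ * ‖e‖ = a e (K e - v) := by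
  rw [map_sub, hv, sub_zero, hsymm, hK, real_inner_self_eq_norm_mul_norm]

theorem aubin_nitsche_duality_general
    {H : Type*} [NormedAddCommGroup H] [InnerProductSpace ℝ H]
    (a : H →ₗ[ℝ] H →ₗ[ℝ] ℝ) (hsymm : ∀ v w : H, a v w = a w v)
    (hpos : ∀ v : H, 0 ≤ a v v)
    (K : H →ₗ[ℝ] H) (hK : ∀ f v : H, a (K f) v = (inner ℝ f v : ℝ))
    (V : Submodule ℝ H) (η : ℝ)
    (happrox : ∀ g : H, ∃ v ∈ V,
      Real.sqrt (a (K g - v) (K g - v)) ≤ η * ‖g‖) :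
    ∀ u : H, ∀ w ∈ V, (∀ v ∈ V, a (u - w) v = 0) →
      ‖u - w‖ ≤ η * Real.sqrt (a (u - w) (u - w)) := by
  intro u w _ hgalerkin
  set e := u - w
  rcases eq_or_ne e 0 with he | he
  · simp [he]
  obtain ⟨v, hv, hv_approx⟩ := happrox e
  have key : ‖e‖ * ‖e‖ ≤ η * √(a e e) * ‖e‖ :=
    calc ‖e‖ * ‖e‖ = a e (K e - v) :=
          norm_mul_self_eq_apply_sub_of_apply_eq_zero a hsymm K hK (hgalerkin v hv)
      _ ≤ √(a e e) * √(a (K e - v) (K e - v)) :=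
          LinearMap.BilinForm.apply_le_sqrt_mul_sqrt a hpos ⟨fun x y ↦ hsymm x y⟩ e (K e - v)
      _ ≤ √(a e e) * (η * ‖e‖) := by gcongr
      _ = η * √(a e e) * ‖e‖ := by ring
  exact le_of_mul_le_mul_right key (norm_pos_iff.mpr he)

/-- Aubin–Nitsche duality estimate: if `V` has approximation quality `η` for
the solution operator `K` of `a`, then for any `u` and any Galerkin projection
`w ∈ V` of `u` one has `‖u − w‖ ≤ η ‖u − w‖_a`. -/
theorem aubin_nitsche_duality
    {H : Type*} [NormedAddCommGroup H] [InnerProductSpace ℝ H]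
    (a : H →ₗ[ℝ] H →ₗ[ℝ] ℝ) (hsymm : ∀ v w : H, a v w = a w v)
    (hpos : ∀ v : H, 0 ≤ a v v)
    (K : H →ₗ[ℝ] H) (hK : ∀ f v : H, a (K f) v = (inner ℝ f v : ℝ))
    (V : Submodule ℝ H) (η : ℝ) (hη : 0 ≤ η)
    (happrox : ∀ g : H, ∃ v ∈ V,
      Real.sqrt (a (K g - v) (K g - v)) ≤ η * ‖g‖) :
    ∀ u : H, ∀ w ∈ V, (∀ v ∈ V, a (u - w) v = 0) →
      ‖u - w‖ ≤ η * Real.sqrt (a (u - w) (u - w)) :=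
  aubin_nitsche_duality_general a hsymm hpos K hK V η happrox
end

section
/- Let α ∈ (0,1), α₀ > 0, r > 0, and let (d_k)_{k≥0} be a sequence of nonnegative reals satisfying d_{k+1}² ≤ α² d_k² + α₀² r² d_{k-1}² for all k ≥ 1. With ᾱ² := (α² + √(α⁴ + 4α₀²r²))/2 and β² := 2α₀²/(α² + √(α⁴ + 4α₀²r²)), one has for every n ≥ 1: d_n² + β²r² d_{n-1}² ≤ ᾱ^{2(n-1)} (d_1² + β²r² d_0²); i.e. the quantity d_n² + β²r² d_{n-1}² decays geometrically with rate ᾱ². -/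
/-!
Writing `A` for the positive root of `x² = a x + c` (here `a = α²`, `c = α₀² r²`), the
recursion `e_{k+2} ≤ a e_{k+1} + c e_k` for `e_k = d_k²` factors through the Lyapunov
quantity `e_{k+1} + (c / A) e_k`: since `A - a = c / A`, it is contracted by the factor `A`
at every step, and `B r² = c / A`.
-/

theorem sq_eq_mul_add_of_eq_half_add_sqrt {a c A : ℝ} (hdisc : 0 ≤ a ^ 2 + 4 * c)
    (hA : A = (a + √(a ^ 2 + 4 * c)) / 2) : A ^ 2 = a * A + c := by
  have hsq := Real.sq_sqrt hdisc
  rw [hA]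
  linear_combination hsq / 4

theorem add_div_mul_le_mul_of_le_add {K : Type*} [Field K] [LinearOrder K]
    [IsStrictOrderedRing K] {e : ℕ → K} {a c A : K} (hA0 : A ≠ 0) (hA : A ^ 2 = a * A + c)
    (hrec : ∀ k, e (k + 2) ≤ a * e (k + 1) + c * e k) (k : ℕ) :
    e (k + 2) + c / A * e (k + 1) ≤ A * (e (k + 1) + c / A * e k) := by
  have hweight : a + c / A = A := by
    field_simp
    linear_combination -hA
  calc e (k + 2) + c / A * e (k + 1) ≤ (a + c / A) * e (k + 1) + c * e k := by
        linarith [hrec k]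
    _ = A * (e (k + 1) + c / A * e k) := by
        rw [hweight, mul_add, ← mul_assoc, mul_div_cancel₀ _ hA0]

theorem multilevel_geometric_decay_general
    (α α₀ r : ℝ) (hα₀ : 0 < α₀) (hr : 0 < r)
    (d : ℕ → ℝ)
    (hrec : ∀ k : ℕ,
      d (k + 2) ^ 2 ≤ α ^ 2 * d (k + 1) ^ 2 + α₀ ^ 2 * r ^ 2 * d k ^ 2)
    (A B : ℝ)
    (hA : A = (α ^ 2 + Real.sqrt (α ^ 4 + 4 * α₀ ^ 2 * r ^ 2)) / 2)
    (hB : B = 2 * α₀ ^ 2 / (α ^ 2 + Real.sqrt (α ^ 4 + 4 * α₀ ^ 2 * r ^ 2))) :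
    ∀ n : ℕ, d (n + 1) ^ 2 + B * r ^ 2 * d n ^ 2 ≤
      A ^ n * (d 1 ^ 2 + B * r ^ 2 * d 0 ^ 2) := by
  intro n
  have hdisc : α ^ 4 + 4 * α₀ ^ 2 * r ^ 2 = (α ^ 2) ^ 2 + 4 * (α₀ ^ 2 * r ^ 2) := by ring
  have hA0 : 0 < A := by rw [hA]; positivity
  have hroot : A ^ 2 = α ^ 2 * A + α₀ ^ 2 * r ^ 2 :=
    sq_eq_mul_add_of_eq_half_add_sqrt (by positivity) (hdisc ▸ hA)
  have hweight : B * r ^ 2 = α₀ ^ 2 * r ^ 2 / A := by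
    rw [hB, hA]
    field_simp
  rw [hweight]
  exact le_geom (u := fun k => d (k + 1) ^ 2 + α₀ ^ 2 * r ^ 2 / A * d k ^ 2) hA0.le n
    fun k _ => add_div_mul_le_mul_of_le_add (e := fun k => d k ^ 2) hA0.ne' hroot hrec k

/-- Geometric decay (linear convergence) for the abstract contraction recursion
of the adaptive multilevel correction algorithm:
`d_n² + β²r² d_{n-1}² ≤ ᾱ^{2(n-1)} (d_1² + β²r² d_0²)` for all `n ≥ 1`. -/
theorem multilevel_geometric_decay
    (α α₀ r : ℝ) (hα : α ∈ Set.Ioo (0 : ℝ) 1) (hα₀ : 0 < α₀) (hr : 0 < r)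
    (d : ℕ → ℝ) (hd : ∀ k, 0 ≤ d k)
    (hrec : ∀ k : ℕ,
      d (k + 2) ^ 2 ≤ α ^ 2 * d (k + 1) ^ 2 + α₀ ^ 2 * r ^ 2 * d k ^ 2)
    (A B : ℝ)
    (hA : A = (α ^ 2 + Real.sqrt (α ^ 4 + 4 * α₀ ^ 2 * r ^ 2)) / 2)
    (hB : B = 2 * α₀ ^ 2 / (α ^ 2 + Real.sqrt (α ^ 4 + 4 * α₀ ^ 2 * r ^ 2))) :
    ∀ n : ℕ, d (n + 1) ^ 2 + B * r ^ 2 * d n ^ 2 ≤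
      A ^ n * (d 1 ^ 2 + B * r ^ 2 * d 0 ^ 2) :=
  multilevel_geometric_decay_general α α₀ r hα₀ hr d hrec A B hA hB
end
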